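/- arXiv:math/0602596 — 2 statements merged into one kernel-verified Lean document; each statement's English description precedes it below -/
import Mathlib

section
/- In the exterior algebra Λ over the differential polynomial algebra, generated by odd variables θ_k (k ≥ 0) with total derivative ∂ extended by ∂θ_k = θ_{k+1}, the partial derivative operators satisfy ∂/∂θ_i = Σ_{j≥i} C(j,i)·∂^{j−i} ∘ δ_{j,θ}, where δ_{j,θ} = Σ_{r≥0} (−1)^r·C(j+r, j)·∂^r ∘ ∂/∂θ_{j+r} is the j-th higher variational derivative with respect to θ. -/
open MvPolynomial

/-- The differential polynomial algebra `A = ℝ[u₀, u₁, u₂, …]`. -/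
abbrev A := MvPolynomial ℕ ℝ

/-- The exterior algebra `Λ` over `A` on the odd generators `θ_k`, modeled as formal
`A`-linear combinations of ordered monomials `θ_S = θ_{s₁}∧⋯∧θ_{s_r}` indexed by
finite sets `S ⊆ ℕ`. -/
abbrev Lam := (Finset ℕ) →₀ A

/-- The total derivative on `A`, sending `u_j` to `u_{j+1}`. -/
noncomputable def totD : Derivation ℝ A A :=
  MvPolynomial.mkDerivation ℝ (fun j => MvPolynomial.X (j + 1))

/-- The Koszul sign of extracting `θ_i` from the front of the ordered monomial `θ_S`. -/
def sgn (i : ℕ) (S : Finset ℕ) : ℝ := (-1) ^ (S.filter (fun j => j < i)).card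

/-- The graded partial derivative `∂/∂θ_i` on `Λ`. -/
noncomputable def pTheta (i : ℕ) (F : Lam) : Lam :=
  F.sum fun S a => if i ∈ S then sgn i S • Finsupp.single (S.erase i) a else 0

/-- The total derivative `∂` on `Λ`, extended by `∂θ_k = θ_{k+1}`. -/
noncomputable def DLam (F : Lam) : Lam :=
  F.sum fun S a =>
    Finsupp.single S (totD a)
      + ∑ k ∈ S, (if k + 1 ∈ S then 0 else Finsupp.single (insert (k + 1) (S.erase k)) a)

/-- The higher variational derivative
`δ_{j,θ} = Σ_{r≥0} (−1)^r C(j+r, j) ∂^r ∘ ∂/∂θ_{j+r}`. -/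
noncomputable def hvarTheta (j : ℕ) (F : Lam) : Lam :=
  ∑ᶠ r : ℕ, ((-1 : ℝ) ^ r * ((j + r).choose j : ℝ)) • DLam^[r] (pTheta (j + r) F)

/-! Only two features of `Λ` matter: `∂` is linear, and `∂/∂θ_m F = 0` for `m` large. The
identity is then a binomial inversion: after expanding `δ_{j,θ}`, the coefficient of
`∂^k ∘ ∂/∂θ_{i+k}` is `Σ_{a+r=k} C(i+a, i) (-1)^r C(i+k, i+a) = C(i+k, i) (1 - 1)^k`,
which vanishes unless `k = 0`. -/

open Finset

theorem sum_range_choose_mul_neg_one_pow_mul_choose (i k : ℕ) :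
    ∑ a ∈ range (k + 1), ((i + a).choose i : ℤ) * ((-1) ^ (k - a) * (i + k).choose (i + a))
      = if k = 0 then 1 else 0 := by
  have hfactor : ∀ a, ((i + a).choose i : ℤ) * ((-1) ^ (k - a) * (i + k).choose (i + a))
      = (i + k).choose i * ((-1) ^ (k - a) * k.choose a) := by
    intro a
    have h := Nat.choose_mul (n := i + k) (k := i + a) (Nat.le_add_right i a)
    rw [Nat.add_sub_cancel_left, Nat.add_sub_cancel_left] at h
    rw [mul_left_comm, ← Nat.cast_mul, mul_comm ((i + a).choose i), h]
    push_cast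
    ring
  have hbinom : ∑ a ∈ range (k + 1), (-1 : ℤ) ^ (k - a) * k.choose a = 0 ^ k := by
    simpa using (add_pow (1 : ℤ) (-1) k).symm
  rw [sum_congr rfl fun a _ => hfactor a, ← mul_sum, hbinom, zero_pow_eq]
  split_ifs with hk <;> simp [hk]

section HigherVariational

variable {R M : Type*} [Ring R] [AddCommGroup M] [Module R M]

noncomputable def higherVariational (D : Module.End R M) (p : ℕ → M) (j : ℕ) : M :=
  ∑ᶠ r : ℕ, ((-1 : R) ^ r * ((j + r).choose j : R)) • (D ^ r) (p (j + r))

variable {D : Module.End R M} {p : ℕ → M} {N : ℕ}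

theorem higherVariational_eq_sum_range (hp : ∀ m, N ≤ m → p m = 0) (j : ℕ) :
    higherVariational D p j
      = ∑ r ∈ range (N - j),
          ((-1 : R) ^ r * ((j + r).choose j : R)) • (D ^ r) (p (j + r)) := by
  refine finsum_eq_sum_of_support_subset _ fun r hr => ?_
  by_contra h
  simp only [coe_range, Set.mem_Iio, not_lt] at h
  exact hr (by simp only [hp _ (by omega : N ≤ j + r), map_zero, smul_zero])

theorem choose_smul_pow_higherVariational_eq_sum (hp : ∀ m, N ≤ m → p m = 0) (i a : ℕ) :
    ((i + a).choose i : R) • (D ^ a) (higherVariational D p (i + a))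
      = ∑ r ∈ range (N - i - a),
          ((i + a).choose i * ((-1) ^ r * (i + a + r).choose (i + a)) : R)
            • (D ^ (a + r)) (p (i + a + r)) := by
  rw [higherVariational_eq_sum_range hp, map_sum, smul_sum, Nat.sub_sub]
  refine sum_congr rfl fun r _ => ?_
  rw [map_smul, smul_smul, ← Module.End.mul_apply, ← pow_add]

theorem finsum_choose_smul_pow_higherVariational_eq (hp : ∀ m, N ≤ m → p m = 0) (i : ℕ) :
    ∑ᶠ j : ℕ, (j.choose i : R) • (D ^ (j - i)) (higherVariational D p j) = p i := by
  have hsupp :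
      (Function.support fun j => (j.choose i : R) • (D ^ (j - i)) (higherVariational D p j))
        ⊆ Ico i N := by
    intro j hj
    by_contra h
    simp only [coe_Ico, Set.mem_Ico, not_and_or, not_lt, not_le] at h
    refine hj ?_
    rcases h with hji | hNj
    · simp [Nat.choose_eq_zero_of_lt hji]
    · simp [higherVariational_eq_sum_range hp, Nat.sub_eq_zero_of_le hNj]
  have hcoef : ∀ k, ∑ a ∈ range (k + 1),
      ((i + a).choose i * ((-1) ^ (k - a) * (i + a + (k - a)).choose (i + a)) : R)
        • (D ^ (a + (k - a))) (p (i + a + (k - a))) = if k = 0 then p i else 0 := by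
    intro k
    have hk : ∀ a ∈ range (k + 1), a + (k - a) = k := fun a ha =>
      Nat.add_sub_cancel' (Nat.lt_succ_iff.mp (mem_range.mp ha))
    have hsum := congrArg (Int.cast : ℤ → R) (sum_range_choose_mul_neg_one_pow_mul_choose i k)
    push_cast at hsum
    rw [sum_congr rfl fun a ha => by rw [add_assoc, hk a ha], ← sum_smul, hsum]
    split_ifs with h0 <;> simp [h0]
  rw [finsum_eq_sum_of_support_subset _ hsupp, sum_Ico_eq_sum_range,
    sum_congr rfl fun a _ => by
      rw [Nat.add_sub_cancel_left, choose_smul_pow_higherVariational_eq_sum hp],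
    ← sum_range_diag_flip, sum_congr rfl fun k _ => hcoef k, sum_ite_eq']
  split_ifs with hN
  · rfl
  · exact (hp i (by simp only [mem_range, not_lt] at hN; omega)).symm

end HigherVariational

noncomputable def DLamL : Lam →ₗ[ℝ] Lam :=
  Finsupp.lsum ℝ fun S => Finsupp.lsingle S ∘ₗ totD.toLinearMap
    + ∑ k ∈ S, if k + 1 ∈ S then 0 else Finsupp.lsingle (insert (k + 1) (S.erase k))

theorem coe_DLamL : ⇑DLamL = DLam := by
  ext1 F
  rw [DLamL, Finsupp.lsum_apply]
  refine Finsupp.sum_congr fun S _ => ?_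
  simp only [LinearMap.add_apply, LinearMap.coe_comp, Function.comp_apply, Finsupp.lsingle_apply,
    LinearMap.sum_apply]
  congr 1
  exact sum_congr rfl fun k _ => by split_ifs <;> rfl

theorem hvarTheta_eq_higherVariational (j : ℕ) (F : Lam) :
    hvarTheta j F = higherVariational DLamL (pTheta · F) j := by
  simp only [hvarTheta, higherVariational, Module.End.coe_pow, coe_DLamL]

theorem pTheta_eq_zero_of_forall_notMem {m : ℕ} {F : Lam} (h : ∀ S ∈ F.support, m ∉ S) :
    pTheta m F = 0 :=
  sum_eq_zero fun S hS => if_neg (h S hS)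

theorem exists_forall_pTheta_eq_zero (F : Lam) : ∃ N, ∀ m, N ≤ m → pTheta m F = 0 := by
  refine ⟨F.support.sup (fun S => S.sup id) + 1, fun m hm => pTheta_eq_zero_of_forall_notMem ?_⟩
  intro S hS hmS
  have := (le_sup (f := id) hmS).trans (le_sup (f := fun S => S.sup id) hS)
  simp only [id] at this
  omega

/-- The operator identity `∂/∂θ_i = Σ_{j≥i} C(j, i) ∂^{j−i} ∘ δ_{j,θ}` on `Λ`
(the terms with `j < i` vanish since then `C(j, i) = 0`). -/
theorem pTheta_eq_sum_hvarTheta (i : ℕ) (F : Lam) :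
    pTheta i F = ∑ᶠ j : ℕ, ((j.choose i : ℝ)) • DLam^[j - i] (hvarTheta j F) := by
  obtain ⟨N, hN⟩ := exists_forall_pTheta_eq_zero F
  simp only [hvarTheta_eq_higherVariational, ← coe_DLamL, ← Module.End.coe_pow]
  exact (finsum_choose_smul_pow_higherVariational_eq hN i).symm
end

section
/- Let Λ^k be the space of elements of the graded algebra Λ that are homogeneous of degree k in the odd generators θ_j, and let N = θ·δ_θ where δ_θ = Σ_{r≥0}(−∂)^r ∘ ∂/∂θ_r (in one dependent variable). Then for every F ∈ Λ^k, the element N F − k·F is a total derivative, i.e., lies in ∂Λ^k. -/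
open MvPolynomial

/-- The normalization operator `N = θ·δ_θ`: left wedge by `θ = θ₀` composed with the
variational derivative `δ_θ = δ_{0,θ}`. -/
noncomputable def NLam (F : Lam) : Lam :=
  (hvarTheta 0 F).sum fun S a => if 0 ∈ S then 0 else Finsupp.single (insert 0 S) a
/-!
By linearity it suffices to treat a monomial `a θ_S` with `|S| = k`, for which
`δ_θ (a θ_S) = Σ_{r ∈ S} ± (-∂)^r (a θ_{S∖r})`. The Leibniz rule `∂ θ_m = θ_{m+1} + θ_m ∂`
integrated by parts gives `θ ∂^r X ≡ (-1)^r θ_r X` modulo `∂Λ^k`, and the signs cancel, so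
each of the `k` terms of `N (a θ_S)` is congruent to `a θ_S`.
-/

open Finsupp

namespace Finsupp

theorem map_mem_of_mem_supported {α M N R : Type*} [Semiring R] [AddCommMonoid M] [Module R M]
    [AddCommMonoid N] [Module R N] {s : Set α} {p : Submodule R N} (f : (α →₀ M) →ₗ[R] N)
    (hf : ∀ a ∈ s, ∀ m, f (single a m) ∈ p) {F : α →₀ M} (hF : F ∈ supported M R s) :
    f F ∈ p := by
  rw [← F.sum_single, map_finsuppSum]
  exact Submodule.finsuppSum_mem _ _ _ _ fun a ha => hf a (hF (mem_support_iff.2 ha)) _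

end Finsupp

section Sign

theorem sgn_zero (T : Finset ℕ) : sgn 0 T = 1 := by simp [sgn]

theorem sgn_mul_self (m : ℕ) (T : Finset ℕ) : sgn m T * sgn m T = 1 := by
  rw [sgn, ← pow_add]
  exact Even.neg_one_pow ⟨_, rfl⟩

theorem sgn_succ_of_notMem {m : ℕ} {T : Finset ℕ} (h : m ∉ T) : sgn (m + 1) T = sgn m T := by
  unfold sgn
  congr 2
  refine Finset.filter_congr fun j hj => ?_
  have := ne_of_mem_of_not_mem hj h
  omega

theorem sgn_succ_of_mem {m : ℕ} {T : Finset ℕ} (h : m ∈ T) : sgn (m + 1) T = -sgn m T := by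
  have : T.filter (· < m + 1) = insert m (T.filter (· < m)) := by
    ext j
    simp only [Finset.mem_filter, Finset.mem_insert]
    constructor
    · rintro ⟨hj, hlt⟩
      by_cases hjm : j = m
      · exact Or.inl hjm
      · exact Or.inr ⟨hj, by omega⟩
    · rintro (rfl | ⟨hj, hlt⟩)
      · exact ⟨h, by omega⟩
      · exact ⟨hj, by omega⟩
  rw [sgn, sgn, this, Finset.card_insert_of_notMem (by simp), pow_succ, mul_neg_one]

theorem sgn_erase_of_le {m r : ℕ} (T : Finset ℕ) (h : m ≤ r) : sgn m (T.erase r) = sgn m T := by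
  rw [sgn, sgn, Finset.filter_erase, Finset.erase_eq_of_notMem (by simp; omega)]

theorem sgn_insert_of_le {m r : ℕ} (T : Finset ℕ) (h : m ≤ r) : sgn m (insert r T) = sgn m T := by
  rw [sgn, sgn, Finset.filter_insert, if_neg (by omega)]

/-- Moving `θ_k` to `θ_{k+1}` crosses no index other than `k` and `k + 1`. -/
theorem sgn_insert_succ_erase {m k : ℕ} {T : Finset ℕ} (hk : k ∈ T) (hk1 : k + 1 ∉ T)
    (hk1m : k + 1 ≠ m) : sgn m (insert (k + 1) (T.erase k)) = sgn m T := by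
  unfold sgn
  rw [Finset.filter_insert, Finset.filter_erase]
  by_cases h : k + 1 < m
  · rw [if_pos h, Finset.card_insert_of_notMem (by simp [hk1]),
      Finset.card_erase_add_one (Finset.mem_filter.mpr ⟨hk, by omega⟩)]
  · rw [if_neg h, Finset.erase_eq_of_notMem (by simp; omega)]

end Sign

section Operators

/-- Left multiplication by `θ_m`. -/
noncomputable def wedgeTheta (m : ℕ) : Lam →ₗ[ℝ] Lam :=
  lsum ℝ fun T => if m ∈ T then 0 else sgn m T • lsingle (insert m T)

noncomputable def DLamₗ : Lam →ₗ[ℝ] Lam :=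
  lsum ℝ fun S => (lsingle S).comp totD.toLinearMap
    + ∑ k ∈ S, if k + 1 ∈ S then 0 else lsingle (insert (k + 1) (S.erase k))

noncomputable def pThetaₗ (i : ℕ) : Lam →ₗ[ℝ] Lam :=
  lsum ℝ fun S => if i ∈ S then sgn i S • lsingle (S.erase i) else 0

theorem coe_DLamₗ : ⇑DLamₗ = DLam := by
  ext1 F
  rw [DLamₗ, lsum_apply, DLam]
  exact sum_congr fun T _ => by simp [apply_ite (fun f : A →ₗ[ℝ] Lam => f (F T))]

theorem coe_pThetaₗ (i : ℕ) : ⇑(pThetaₗ i) = pTheta i := by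
  ext1 F
  rw [pThetaₗ, lsum_apply, pTheta]
  exact sum_congr fun T _ => by simp [apply_ite (fun f : A →ₗ[ℝ] Lam => f (F T))]

theorem wedgeTheta_apply (m : ℕ) (F : Lam) :
    wedgeTheta m F = F.sum fun T a => if m ∈ T then 0 else sgn m T • single (insert m T) a := by
  rw [wedgeTheta, lsum_apply]
  exact sum_congr fun T _ => by simp [apply_ite (fun f : A →ₗ[ℝ] Lam => f (F T))]

theorem wedgeTheta_single (m : ℕ) (T : Finset ℕ) (a : A) : wedgeTheta m (single T a) =
    if m ∈ T then 0 else sgn m T • single (insert m T) a := by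
  simp [wedgeTheta, lsum_single, apply_ite (fun f : A →ₗ[ℝ] Lam => f a)]

theorem pThetaₗ_single (i : ℕ) (S : Finset ℕ) (a : A) :
    pThetaₗ i (single S a) = if i ∈ S then sgn i S • single (S.erase i) a else 0 := by
  simp [pThetaₗ, lsum_single, apply_ite (fun f : A →ₗ[ℝ] Lam => f a)]

/-- The term of `∂ θ_T` in which `θ_k` is replaced by `θ_{k+1}`. -/
noncomputable def raiseTheta (k : ℕ) (T : Finset ℕ) (a : A) : Lam :=
  if k + 1 ∈ T then 0 else single (insert (k + 1) (T.erase k)) a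

theorem DLamₗ_single (T : Finset ℕ) (a : A) :
    DLamₗ (single T a) = single T (totD a) + ∑ k ∈ T, raiseTheta k T a := by
  simp [DLamₗ, raiseTheta, lsum_single, apply_ite (fun f : A →ₗ[ℝ] Lam => f a)]

theorem NLam_eq_wedgeTheta_zero (F : Lam) : NLam F = wedgeTheta 0 (hvarTheta 0 F) := by
  rw [NLam, wedgeTheta_apply]
  exact sum_congr fun T _ => by split_ifs <;> simp [sgn_zero]

end Operators

section Leibniz

theorem wedgeTheta_raiseTheta_of_mem {m k : ℕ} {T : Finset ℕ} (hm : m ∈ T) (hk : k ≠ m)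
    (a : A) : wedgeTheta m (raiseTheta k T a) = 0 := by
  unfold raiseTheta
  split_ifs
  · exact map_zero _
  · rw [wedgeTheta_single, if_pos (by simp [hm, Ne.symm hk])]

theorem wedgeTheta_raiseTheta_self {m : ℕ} {T : Finset ℕ} (hm : m ∈ T) (a : A) :
    wedgeTheta m (raiseTheta m T a) = -wedgeTheta (m + 1) (single T a) := by
  unfold raiseTheta
  rw [wedgeTheta_single (m + 1)]
  split_ifs with h
  · simp
  · rw [wedgeTheta_single, if_neg (by simp), sgn_insert_of_le _ (by omega),
      sgn_erase_of_le _ le_rfl, Finset.insert_comm, Finset.insert_erase hm, sgn_succ_of_mem hm,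
      neg_smul, neg_neg]

theorem wedgeTheta_raiseTheta_of_notMem {m k : ℕ} {T : Finset ℕ} (hm : m ∉ T) (hk : k ∈ T)
    (a : A) : wedgeTheta m (raiseTheta k T a) = sgn m T • raiseTheta k (insert m T) a := by
  have hkm : k ≠ m := ne_of_mem_of_not_mem hk hm
  unfold raiseTheta
  by_cases h : k + 1 ∈ T
  · simp [h]
  by_cases hk1m : k + 1 = m
  · subst hk1m
    rw [if_neg h, wedgeTheta_single, if_pos (Finset.mem_insert_self _ _),
      if_pos (Finset.mem_insert_self _ _), smul_zero]
  rw [if_neg h, if_neg (by simp [h, hk1m]), wedgeTheta_single, if_neg (by simp [hm, Ne.symm hk1m]),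
    Finset.erase_insert_of_ne (Ne.symm hkm), Finset.insert_comm, sgn_insert_succ_erase hk h hk1m]

theorem raiseTheta_insert_self {m : ℕ} {T : Finset ℕ} (hm : m ∉ T) (a : A) :
    sgn m T • raiseTheta m (insert m T) a = wedgeTheta (m + 1) (single T a) := by
  unfold raiseTheta
  rw [wedgeTheta_single, Finset.erase_insert hm, sgn_succ_of_notMem hm]
  by_cases h : m + 1 ∈ T
  · simp [h]
  · rw [if_neg (by simp [h]), if_neg h]

theorem DLamₗ_wedgeTheta (m : ℕ) (F : Lam) :
    DLamₗ (wedgeTheta m F) = wedgeTheta (m + 1) F + wedgeTheta m (DLamₗ F) := by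
  suffices DLamₗ ∘ₗ wedgeTheta m = wedgeTheta (m + 1) + wedgeTheta m ∘ₗ DLamₗ from
    LinearMap.congr_fun this F
  refine lhom_ext fun T a => ?_
  simp only [LinearMap.comp_apply, LinearMap.add_apply, DLamₗ_single, map_add, map_sum]
  by_cases hm : m ∈ T
  · rw [wedgeTheta_single, if_pos hm, wedgeTheta_single m, if_pos hm, map_zero,
      ← Finset.add_sum_erase _ _ hm, wedgeTheta_raiseTheta_self hm,
      Finset.sum_eq_zero fun k hk => wedgeTheta_raiseTheta_of_mem hm (Finset.ne_of_mem_erase hk) a]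
    abel
  · rw [wedgeTheta_single, if_neg hm, map_smul, DLamₗ_single, Finset.sum_insert hm, smul_add,
      smul_add, raiseTheta_insert_self hm, wedgeTheta_single m, if_neg hm, Finset.smul_sum,
      Finset.sum_congr rfl fun k hk => (wedgeTheta_raiseTheta_of_notMem hm hk a).symm]
    abel

end Leibniz

section Degree

/-- `Λ^k`. -/
noncomputable abbrev LamDeg (k : ℕ) : Submodule ℝ Lam := supported A ℝ {S : Finset ℕ | S.card = k}

theorem mem_LamDeg {k : ℕ} {F : Lam} : F ∈ LamDeg k ↔ ∀ S ∈ F.support, S.card = k :=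
  mem_supported _ _

theorem single_mem_LamDeg (S : Finset ℕ) (a : A) : single S a ∈ LamDeg S.card :=
  single_mem_supported _ _ rfl

theorem raiseTheta_mem_LamDeg {k : ℕ} {T : Finset ℕ} (hk : k ∈ T) (a : A) :
    raiseTheta k T a ∈ LamDeg T.card := by
  unfold raiseTheta
  split_ifs with h
  · exact zero_mem _
  · rw [← Finset.card_erase_add_one hk,
      ← Finset.card_insert_of_notMem (s := T.erase k) (a := k + 1) (by simp [h])]
    exact single_mem_LamDeg _ a

theorem DLamₗ_mem_LamDeg {k : ℕ} {F : Lam} (hF : F ∈ LamDeg k) : DLamₗ F ∈ LamDeg k := by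
  refine map_mem_of_mem_supported _ (fun T hT a => ?_) hF
  rw [DLamₗ_single, ← show T.card = k from hT]
  exact add_mem (single_mem_LamDeg _ _) (sum_mem fun k hk => raiseTheta_mem_LamDeg hk a)

theorem wedgeTheta_mem_LamDeg (m : ℕ) {k : ℕ} {F : Lam} (hF : F ∈ LamDeg k) :
    wedgeTheta m F ∈ LamDeg (k + 1) := by
  refine map_mem_of_mem_supported _ (fun T hT a => ?_) hF
  rw [wedgeTheta_single, ← show T.card = k from hT]
  split_ifs with hm
  · exact zero_mem _
  · rw [← Finset.card_insert_of_notMem hm]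
    exact Submodule.smul_mem _ _ (single_mem_LamDeg _ _)

end Degree

/-- Integration by parts. -/
theorem wedgeTheta_DLamₗ_pow_sub_mem (m r : ℕ) {c : ℕ} {X : Lam} (hX : X ∈ LamDeg c) :
    wedgeTheta m ((DLamₗ ^ r) X) - (-1 : ℝ) ^ r • wedgeTheta (m + r) X ∈
      (LamDeg (c + 1)).map DLamₗ := by
  induction r generalizing X with
  | zero => simp
  | succ r ih =>
    have hD : DLamₗ (wedgeTheta (m + r) X) ∈ (LamDeg (c + 1)).map DLamₗ :=
      Submodule.mem_map_of_mem (wedgeTheta_mem_LamDeg _ hX)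
    convert add_mem (ih (DLamₗ_mem_LamDeg hX)) (Submodule.smul_mem _ ((-1 : ℝ) ^ r) hD) using 1
    rw [DLamₗ_wedgeTheta, pow_succ, Module.End.mul_apply, ← add_assoc m]
    module

section Normalization

theorem pThetaₗ_eq_zero {r : ℕ} {F : Lam} (hF : ∀ T ∈ F.support, r ∉ T) : pThetaₗ r F = 0 := by
  refine (Submodule.mem_bot ℝ).1 (map_mem_of_mem_supported (s := {T | r ∉ T}) _ ?_ hF)
  intro T hT a
  rw [pThetaₗ_single, if_neg hT]
  exact zero_mem _

/-- `δ_θ` truncated to the generators `θ_r`, `r ∈ R`. -/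
noncomputable def varDerivₗ (R : Finset ℕ) : Lam →ₗ[ℝ] Lam :=
  ∑ r ∈ R, (-1 : ℝ) ^ r • ((DLamₗ ^ r) ∘ₗ pThetaₗ r)

theorem varDerivₗ_apply (R : Finset ℕ) (F : Lam) :
    varDerivₗ R F = ∑ r ∈ R, (-1 : ℝ) ^ r • (DLamₗ ^ r) (pThetaₗ r F) := by
  simp only [varDerivₗ, LinearMap.coe_sum, Finset.sum_apply, LinearMap.smul_apply,
    LinearMap.comp_apply]

theorem hvarTheta_zero_eq_varDerivₗ {F : Lam} {R : Finset ℕ} (hR : ∀ T ∈ F.support, T ⊆ R) :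
    hvarTheta 0 F = varDerivₗ R F := by
  rw [hvarTheta, varDerivₗ_apply]
  simp only [zero_add, Nat.choose_zero_right, Nat.cast_one, mul_one, ← coe_DLamₗ,
    ← Module.End.coe_pow, ← coe_pThetaₗ]
  refine finsum_eq_sum_of_support_subset _ fun r hr => by_contra fun hrR => hr ?_
  dsimp only
  rw [pThetaₗ_eq_zero fun T hT hrT => hrR (hR T hT hrT), map_zero, smul_zero]

theorem NLam_eq_wedgeTheta_varDerivₗ {F : Lam} {R : Finset ℕ} (hR : ∀ T ∈ F.support, T ⊆ R) :
    NLam F = wedgeTheta 0 (varDerivₗ R F) := by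
  rw [NLam_eq_wedgeTheta_zero, hvarTheta_zero_eq_varDerivₗ hR]

noncomputable def NLamₗ : Lam →ₗ[ℝ] Lam where
  toFun := NLam
  map_add' F G := by
    let R := F.support.sup id ∪ G.support.sup id
    have hF : ∀ T ∈ F.support, T ⊆ R := fun T hT =>
      (Finset.le_sup (f := id) hT).trans Finset.subset_union_left
    have hG : ∀ T ∈ G.support, T ⊆ R := fun T hT =>
      (Finset.le_sup (f := id) hT).trans Finset.subset_union_right
    have hFG : ∀ T ∈ (F + G).support, T ⊆ R := fun T hT =>
      (Finset.mem_union.1 (support_add hT)).elim (hF T) (hG T)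
    rw [NLam_eq_wedgeTheta_varDerivₗ hFG, NLam_eq_wedgeTheta_varDerivₗ hF,
      NLam_eq_wedgeTheta_varDerivₗ hG, map_add, map_add]
  map_smul' c F := by
    have hF : ∀ T ∈ F.support, T ⊆ F.support.sup id := fun T hT => Finset.le_sup (f := id) hT
    rw [NLam_eq_wedgeTheta_varDerivₗ fun T hT => hF T (support_smul hT),
      NLam_eq_wedgeTheta_varDerivₗ hF, map_smul, map_smul, RingHom.id_apply]

theorem NLam_single_sub_mem (S : Finset ℕ) (a : A) :
    NLam (single S a) - (S.card : ℝ) • single S a ∈ (LamDeg S.card).map DLamₗ := by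
  have hterm : ∀ r ∈ S, wedgeTheta 0 ((-1 : ℝ) ^ r • (DLamₗ ^ r) (pThetaₗ r (single S a)))
      - single S a ∈ (LamDeg S.card).map DLamₗ := by
    intro r hr
    have h := wedgeTheta_DLamₗ_pow_sub_mem 0 r (single_mem_LamDeg (S.erase r) a)
    rw [Finset.card_erase_add_one hr, zero_add] at h
    convert Submodule.smul_mem _ ((-1 : ℝ) ^ r * sgn r S) h using 1
    rw [pThetaₗ_single, if_pos hr, wedgeTheta_single, if_neg (Finset.notMem_erase r S),
      sgn_erase_of_le _ le_rfl, Finset.insert_erase hr, map_smul, map_smul, map_smul]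
    have hr2 : (-1 : ℝ) ^ r * (-1) ^ r = 1 := by rw [← pow_add]; exact Even.neg_one_pow ⟨r, rfl⟩
    match_scalars
    · ring
    · linear_combination (sgn r S * sgn r S) * hr2 + sgn_mul_self r S
  have hsum := Submodule.sum_mem _ hterm
  rwa [Finset.sum_sub_distrib, Finset.sum_const, ← Nat.cast_smul_eq_nsmul ℝ, ← map_sum,
    ← varDerivₗ_apply, ← NLam_eq_wedgeTheta_varDerivₗ fun T hT =>
      (Finset.mem_singleton.1 (support_single_subset hT)).le] at hsum

end Normalization

/-- For `F ∈ Λ^k` (homogeneous of degree `k` in the odd generators),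
`N F − k·F` is a total derivative, lying in `∂Λ^k`. -/
theorem normalization (k : ℕ) (F : Lam) (hF : ∀ S ∈ F.support, S.card = k) :
    ∃ G : Lam, (∀ S ∈ G.support, S.card = k) ∧ NLam F - (k : ℝ) • F = DLam G := by
  have hmem : (NLamₗ - (k : ℝ) • LinearMap.id : Lam →ₗ[ℝ] Lam) F ∈ (LamDeg k).map DLamₗ :=
    map_mem_of_mem_supported _ (fun S hS a => (show S.card = k from hS) ▸ NLam_single_sub_mem S a)
      (mem_LamDeg.2 hF)
  obtain ⟨G, hG, hGF⟩ := hmem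
  exact ⟨G, mem_LamDeg.1 hG, by rw [← coe_DLamₗ, hGF]; rfl⟩
end
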